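/- arXiv:math/0310265 — 2 statements merged into one kernel-verified Lean document; each statement's English description precedes it below -/
import Mathlib

section
/- Let g ∈ N be positive and invertible with E_{Z(N)}(g) = 1, and let f ∈ N^o ⊗ N. Then the following are equivalent: (i) f = (1^o ⊗ g)·e (i.e., f is the separating element of N associated to g); (ii) f is idempotent (f² = f), the left-multiplication operators by f and by e on N^o ⊗ N have the same kernel, and f is self-adjoint for the deformed involution, i.e., ((g^{1/2})^o ⊗ g^{1/2}) · f* · ((g^{-1/2})^o ⊗ g^{-1/2}) = f, where f* is the adjoint of f in N^o ⊗ N for the involution (a^o ⊗ b)* = (a*)^o ⊗ b*. -/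
/- Context: `N = ⨁_{γ ∈ Γ} M_{n γ}(ℂ)`, with matrix units `matUnit n γ i j`,
`N^o ⊗ N` the algebraic tensor product of the opposite algebra with `N`,
`mulMap` the multiplication map `m(a^o ⊗ b) = a * b`, `sepE` the symmetric
separating element `e = Σ_γ Σ_{i,j} (1/n_γ) (e^γ_{i,j})^o ⊗ e^γ_{j,i}`, and
`EZ` the canonical conditional expectation onto the center of `N`. -/

open scoped TensorProduct
open MulOpposite

/-- The algebra `N = ⨁_{γ ∈ Γ} M_{n γ}(ℂ)`. -/
abbrev NAlg {Γ : Type*} [Fintype Γ] (n : Γ → ℕ) : Type _ :=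
  ∀ γ : Γ, Matrix (Fin (n γ)) (Fin (n γ)) ℂ

/-- The matrix units `e^γ_{i,j}` of `N`. -/
noncomputable def matUnit {Γ : Type*} [Fintype Γ] [DecidableEq Γ] (n : Γ → ℕ)
    (γ : Γ) (i j : Fin (n γ)) : NAlg n :=
  Pi.single γ (Matrix.single i j 1)

/-- The multiplication map `m : N^o ⊗ N → N`, `m(a^o ⊗ b) = ab`. -/
noncomputable def mulMap {Γ : Type*} [Fintype Γ] (n : Γ → ℕ) :
    ((NAlg n)ᵐᵒᵖ ⊗[ℂ] NAlg n) →ₗ[ℂ] NAlg n :=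
  (LinearMap.mul' ℂ (NAlg n)).comp
    (TensorProduct.map (opLinearEquiv ℂ).symm.toLinearMap LinearMap.id)

/-- The symmetric separating element `e = Σ_γ Σ_{i,j} (1/n_γ) (e^γ_{i,j})^o ⊗ e^γ_{j,i}`. -/
noncomputable def sepE {Γ : Type*} [Fintype Γ] [DecidableEq Γ] (n : Γ → ℕ) :
    (NAlg n)ᵐᵒᵖ ⊗[ℂ] NAlg n :=
  ∑ γ : Γ, ∑ i : Fin (n γ), ∑ j : Fin (n γ),
    (n γ : ℂ)⁻¹ • (op (matUnit n γ i j) ⊗ₜ[ℂ] matUnit n γ j i)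

/-- `f ∈ N^o ⊗ N` is a separating element of `N` if `f(a^o ⊗ 1) = f(1 ⊗ a)` for all
`a ∈ N` and `m(f) = 1`. -/
def IsSepElt {Γ : Type*} [Fintype Γ] (n : Γ → ℕ) (f : (NAlg n)ᵐᵒᵖ ⊗[ℂ] NAlg n) : Prop :=
  (∀ a : NAlg n, f * (op a ⊗ₜ[ℂ] (1 : NAlg n)) = f * ((1 : (NAlg n)ᵐᵒᵖ) ⊗ₜ[ℂ] a)) ∧
    mulMap n f = 1

/-- The canonical conditional expectation `E_{Z(N)} : N → Z(N)`,
`E_{Z(N)}(x) = Σ_γ Σ_{i,j} (1/n_γ) e^γ_{i,j} x e^γ_{j,i}`. -/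
noncomputable def EZ {Γ : Type*} [Fintype Γ] [DecidableEq Γ] (n : Γ → ℕ)
    (x : NAlg n) : NAlg n :=
  ∑ γ : Γ, ∑ i : Fin (n γ), ∑ j : Fin (n γ),
    (n γ : ℂ)⁻¹ • (matUnit n γ i j * x * matUnit n γ j i)

/-!
Put `F = (1 ⊗ g) e`. The identities `e (a^o ⊗ 1) = e (1 ⊗ a)` and `(a^o ⊗ 1) e = (1 ⊗ a) e` give
`e (1 ⊗ x) e = e (1 ⊗ E_{Z(N)}(x))`, so `e F = e` because `E_{Z(N)}(g) = 1`. Hence `F` is an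
idempotent with the same right annihilator as `e`, and it is fixed by the anti-automorphism
`σ(x) = (s^o ⊗ s) x* ((s^{-1})^o ⊗ s^{-1})`. Conversely, idempotents `f`, `F` with the same right
annihilator satisfy `f F = f` and `F f = F`; if `σ` fixes both, then
`f = σ(f F) = σ(F) σ(f) = F f = F`.
-/

section Ring

variable {R : Type*} [Ring R] {f F : R}

theorem mul_eq_left_of_forall_mul_eq_zero (hF : IsIdempotentElem F)
    (h : ∀ u, F * u = 0 → f * u = 0) : f * F = f := by
  have := h (1 - F) (by rw [mul_sub, mul_one, hF.eq, sub_self])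
  rwa [mul_sub, mul_one, sub_eq_zero, eq_comm] at this

theorem IsIdempotentElem.eq_of_forall_mul_eq_zero_iff_of_antimul (hf : IsIdempotentElem f)
    (hF : IsIdempotentElem F) (h : ∀ u, f * u = 0 ↔ F * u = 0) (σ : R → R)
    (hσ : ∀ x y, σ (x * y) = σ y * σ x) (hσf : σ f = f) (hσF : σ F = F) : f = F :=
  calc f = σ (f * F) := by rw [mul_eq_left_of_forall_mul_eq_zero hF fun u => (h u).2, hσf]
    _ = F * f := by rw [hσ, hσf, hσF]
    _ = F := mul_eq_left_of_forall_mul_eq_zero hf fun u => (h u).1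

end Ring

theorem mul_star_mul_mul_star_mul {M : Type*} [Monoid M] [StarMul M] {w w' : M} (h : w' * w = 1)
    (x y : M) : w * star (x * y) * w' = (w * star y * w') * (w * star x * w') := by
  rw [star_mul, mul_assoc (w * star y), ← mul_assoc w', ← mul_assoc w', h, one_mul]
  simp only [mul_assoc]

theorem TensorProduct.eq_star_of_map_add_of_map_tmul {R A B : Type*} [CommSemiring R]
    [StarRing R] [AddCommMonoid A] [StarAddMonoid A] [Module R A] [StarModule R A]
    [AddCommMonoid B] [StarAddMonoid B] [Module R B] [StarModule R B]
    (t : A ⊗[R] B → A ⊗[R] B) (map_add : ∀ x y, t (x + y) = t x + t y)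
    (map_tmul : ∀ a b, t (a ⊗ₜ b) = star a ⊗ₜ star b) : t = star := by
  have map_zero : t 0 = 0 := by simpa using map_tmul 0 0
  funext x
  induction x using TensorProduct.induction_on with
  | zero => rw [map_zero, star_zero]
  | tmul a b => exact map_tmul a b
  | add x y hx hy => rw [map_add, hx, hy, star_add]

section NAlg

variable {Γ : Type*} [Fintype Γ] [DecidableEq Γ] (n : Γ → ℕ)

theorem matUnit_mul_matUnit (γ : Γ) (i j k l : Fin (n γ)) :
    matUnit n γ i j * matUnit n γ k l = if j = k then matUnit n γ i l else 0 := by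
  rw [matUnit, matUnit, ← Pi.single_mul]
  split_ifs with h
  · rw [h, Matrix.single_mul_single_same, mul_one, matUnit]
  · rw [Matrix.single_mul_single_of_ne (1 : ℂ) i j k h, Pi.single_zero]

theorem matUnit_mul_matUnit_of_ne {γ δ : Γ} (h : γ ≠ δ) (i j : Fin (n γ)) (k l : Fin (n δ)) :
    matUnit n γ i j * matUnit n δ k l = 0 := by
  rw [matUnit, matUnit, ← Pi.single_mul_left, Pi.single_eq_of_ne h, mul_zero, Pi.single_zero]

theorem star_matUnit (γ : Γ) (i j : Fin (n γ)) :
    star (matUnit n γ i j) = matUnit n γ j i := by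
  rw [matUnit, Pi.star_single, Matrix.star_eq_conjTranspose, Matrix.conjTranspose_single,
    star_one, matUnit]

theorem sum_apply_smul_matUnit (x : NAlg n) :
    ∑ γ, ∑ k, ∑ l, x γ k l • matUnit n γ k l = x := by
  conv_rhs => rw [← Finset.univ_sum_single x]
  refine Finset.sum_congr rfl fun γ _ => ?_
  conv_rhs => rw [Matrix.matrix_eq_sum_single (x γ)]
  simp only [matUnit, ← Pi.single_smul, Matrix.smul_single, smul_eq_mul, mul_one]
  simp only [← AddMonoidHom.single_apply, map_sum]

theorem star_sepE : star (sepE n) = sepE n := by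
  simp only [sepE, star_sum, star_smul, TensorProduct.star_tmul, ← op_star, star_matUnit,
    star_inv₀, star_natCast]
  exact Finset.sum_congr rfl fun γ _ => Finset.sum_comm

theorem sepE_mul_op_matUnit_tmul_one (δ : Γ) (k l : Fin (n δ)) :
    sepE n * (op (matUnit n δ k l) ⊗ₜ[ℂ] 1) = sepE n * (1 ⊗ₜ[ℂ] matUnit n δ k l) := by
  simp only [sepE, Finset.sum_mul, smul_mul_assoc, Algebra.TensorProduct.tmul_mul_tmul, mul_one,
    ← op_mul]
  rw [Finset.sum_eq_single δ, Finset.sum_eq_single δ]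
  · simp only [matUnit_mul_matUnit, apply_ite op, op_zero, TensorProduct.ite_tmul,
      TensorProduct.tmul_ite, smul_ite, smul_zero, Finset.sum_ite_irrel, Finset.sum_const_zero,
      Finset.sum_ite_eq, Finset.sum_ite_eq', Finset.mem_univ, if_true]
  · intro γ _ hγ
    simp [matUnit_mul_matUnit_of_ne n hγ]
  · simp
  · intro γ _ hγ
    simp [matUnit_mul_matUnit_of_ne n hγ.symm]
  · simp

theorem sepE_mul_op_tmul_one (x : NAlg n) :
    sepE n * (op x ⊗ₜ[ℂ] 1) = sepE n * (1 ⊗ₜ[ℂ] x) := by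
  rw [← sum_apply_smul_matUnit n x]
  simp only [Finset.op_sum, op_smul, TensorProduct.sum_tmul, TensorProduct.tmul_sum,
    ← TensorProduct.smul_tmul', TensorProduct.tmul_smul, Finset.mul_sum, mul_smul_comm,
    sepE_mul_op_matUnit_tmul_one]

theorem op_tmul_one_mul_sepE (x : NAlg n) :
    (op x ⊗ₜ[ℂ] 1) * sepE n = (1 ⊗ₜ[ℂ] x) * sepE n := by
  simpa [star_sepE] using congrArg star (sepE_mul_op_tmul_one n (star x))

theorem sepE_mul_op_tmul (a b : NAlg n) :
    sepE n * (op a ⊗ₜ[ℂ] b) = sepE n * (1 ⊗ₜ[ℂ] (a * b)) := by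
  rw [← one_mul b, ← mul_one (op a), ← Algebra.TensorProduct.tmul_mul_tmul, ← mul_assoc,
    sepE_mul_op_tmul_one, mul_assoc, Algebra.TensorProduct.tmul_mul_tmul, one_mul, one_mul]

theorem op_tmul_mul_sepE (a b : NAlg n) :
    (op a ⊗ₜ[ℂ] b) * sepE n = (1 ⊗ₜ[ℂ] (b * a)) * sepE n := by
  rw [← mul_one b, ← one_mul (op a), ← Algebra.TensorProduct.tmul_mul_tmul, mul_assoc,
    op_tmul_one_mul_sepE, ← mul_assoc, Algebra.TensorProduct.tmul_mul_tmul, one_mul, mul_one]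

theorem sepE_mul_one_tmul_mul_sepE (x : NAlg n) :
    sepE n * (1 ⊗ₜ[ℂ] x) * sepE n = sepE n * (1 ⊗ₜ[ℂ] EZ n x) := by
  rw [mul_assoc]
  nth_rewrite 2 [sepE]
  simp only [EZ, Finset.mul_sum, mul_smul_comm, Algebra.TensorProduct.tmul_mul_tmul, one_mul,
    sepE_mul_op_tmul, TensorProduct.tmul_sum, TensorProduct.tmul_smul, mul_assoc]

theorem deformed_star_one_tmul_mul_sepE {g s s' : NAlg n} (hg : IsSelfAdjoint g)
    (hsg : s * s = g) (hss' : s * s' = 1) (hs's : s' * s = 1) :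
    (op s ⊗ₜ[ℂ] s) * star ((1 ⊗ₜ[ℂ] g) * sepE n) * (op s' ⊗ₜ[ℂ] s') = (1 ⊗ₜ[ℂ] g) * sepE n := by
  have hg_inv : s' * (g * s') = 1 := by rw [← hsg, mul_assoc, hss', mul_one, hs's]
  calc (op s ⊗ₜ[ℂ] s) * star ((1 ⊗ₜ[ℂ] g) * sepE n) * (op s' ⊗ₜ[ℂ] s')
      = ((op s ⊗ₜ[ℂ] s) * sepE n) * ((1 ⊗ₜ[ℂ] g) * (op s' ⊗ₜ[ℂ] s')) := by
        rw [star_mul, star_sepE, TensorProduct.star_tmul, star_one, hg.star_eq, mul_assoc,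
          mul_assoc, mul_assoc]
    _ = (1 ⊗ₜ[ℂ] g) * (sepE n * (op s' ⊗ₜ[ℂ] (g * s'))) := by
        rw [op_tmul_mul_sepE, hsg, Algebra.TensorProduct.tmul_mul_tmul, one_mul, mul_assoc]
    _ = (1 ⊗ₜ[ℂ] g) * sepE n := by
        rw [sepE_mul_op_tmul, hg_inv, ← Algebra.TensorProduct.one_def, mul_one]

end NAlg

theorem sep_iff_deformed_orthogonal_projection_general {Γ : Type*} [Fintype Γ] [DecidableEq Γ]
    (n : Γ → ℕ)
    (g : NAlg n) (hgpos : ∃ b : NAlg n, g = star b * b) (hgu : IsUnit g)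
    (hgE : EZ n g = 1)
    (s : NAlg n) (hssq : s * s = g)
    (tstar : (NAlg n)ᵐᵒᵖ ⊗[ℂ] NAlg n → (NAlg n)ᵐᵒᵖ ⊗[ℂ] NAlg n)
    (tstar_add : ∀ x y, tstar (x + y) = tstar x + tstar y)
    (tstar_tmul : ∀ (a b : NAlg n), tstar (op a ⊗ₜ[ℂ] b) = op (star a) ⊗ₜ[ℂ] star b)
    (f : (NAlg n)ᵐᵒᵖ ⊗[ℂ] NAlg n) :
    f = (op (1 : NAlg n) ⊗ₜ[ℂ] g) * sepE n ↔
      (f * f = f ∧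
        (∀ u : (NAlg n)ᵐᵒᵖ ⊗[ℂ] NAlg n, f * u = 0 ↔ sepE n * u = 0) ∧
        (op s ⊗ₜ[ℂ] s) * tstar f * (op (Ring.inverse s) ⊗ₜ[ℂ] Ring.inverse s) = f) := by
  obtain rfl : tstar = star :=
    TensorProduct.eq_star_of_map_add_of_map_tmul tstar tstar_add fun a b => tstar_tmul a.unop b
  have hg : IsSelfAdjoint g := hgpos.elim fun b hb => hb ▸ .star_mul_self b
  have hs : IsUnit s := ((Commute.refl s).isUnit_mul_iff.mp (hssq ▸ hgu)).1
  have hss' := Ring.mul_inverse_cancel s hs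
  have hs's := Ring.inverse_mul_cancel s hs
  set s' := Ring.inverse s
  rw [op_one]
  set F := (1 ⊗ₜ[ℂ] g) * sepE n
  have hsepE_F : sepE n * F = sepE n := by
    rw [← mul_assoc, sepE_mul_one_tmul_mul_sepE, hgE, ← Algebra.TensorProduct.one_def, mul_one]
  have hF_ker (u) : F * u = 0 ↔ sepE n * u = 0 :=
    ⟨fun h => by rw [← hsepE_F, mul_assoc, h, mul_zero], fun h => by rw [mul_assoc, h, mul_zero]⟩
  have hF_idem : IsIdempotentElem F := by
    rw [IsIdempotentElem, mul_assoc, hsepE_F]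
  have hσF := deformed_star_one_tmul_mul_sepE n hg hssq hss' hs's
  constructor
  · rintro rfl
    exact ⟨hF_idem, hF_ker, hσF⟩
  · rintro ⟨hf_idem, hf_ker, hσf⟩
    have hw : (op s' ⊗ₜ[ℂ] s') * (op s ⊗ₜ[ℂ] s) = 1 := by
      rw [Algebra.TensorProduct.tmul_mul_tmul, ← op_mul, hss', hs's, op_one,
        Algebra.TensorProduct.one_def]
    exact IsIdempotentElem.eq_of_forall_mul_eq_zero_iff_of_antimul hf_idem hF_idem
      (fun u => (hf_ker u).trans (hF_ker u).symm)
      (fun x => (op s ⊗ₜ[ℂ] s) * star x * (op s' ⊗ₜ[ℂ] s')) (mul_star_mul_mul_star_mul hw)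
      hσf hσF

/-- Let `g ∈ N` be positive and invertible with `E_{Z(N)}(g) = 1`, let `s = g^{1/2}` be
its positive square root, and let `tstar` be the componentwise involution of `N^o ⊗ N`
(`(a^o ⊗ b)* = (a*)^o ⊗ b*`, determined by additivity).  Then `f = (1 ⊗ g)·e` iff `f` is
idempotent, left multiplication by `f` and by `e` have the same kernel, and `f` is
self-adjoint for the deformed involution
`(s^o ⊗ s)·f*·((s⁻¹)^o ⊗ s⁻¹) = f`. -/
theorem sep_iff_deformed_orthogonal_projection {Γ : Type*} [Fintype Γ] [DecidableEq Γ]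
    [Nonempty Γ] (n : Γ → ℕ) (hn : ∀ γ, 1 ≤ n γ)
    (g : NAlg n) (hgpos : ∃ b : NAlg n, g = star b * b) (hgu : IsUnit g)
    (hgE : EZ n g = 1)
    (s : NAlg n) (hspos : ∃ c : NAlg n, s = star c * c) (hssq : s * s = g)
    (tstar : (NAlg n)ᵐᵒᵖ ⊗[ℂ] NAlg n → (NAlg n)ᵐᵒᵖ ⊗[ℂ] NAlg n)
    (tstar_add : ∀ x y, tstar (x + y) = tstar x + tstar y)
    (tstar_tmul : ∀ (a b : NAlg n), tstar (op a ⊗ₜ[ℂ] b) = op (star a) ⊗ₜ[ℂ] star b)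
    (f : (NAlg n)ᵐᵒᵖ ⊗[ℂ] NAlg n) :
    f = (op (1 : NAlg n) ⊗ₜ[ℂ] g) * sepE n ↔
      (f * f = f ∧
        (∀ u : (NAlg n)ᵐᵒᵖ ⊗[ℂ] NAlg n, f * u = 0 ↔ sepE n * u = 0) ∧
        (op s ⊗ₜ[ℂ] s) * tstar f * (op (Ring.inverse s) ⊗ₜ[ℂ] Ring.inverse s) = f) :=
  sep_iff_deformed_orthogonal_projection_general n g hgpos hgu hgE s hssq tstar tstar_add tstar_tmul
    f
end

section
/- The Cartan subalgebras of the deformed structure coincide with those of the original one: { x ∈ A : Δ_k(x) = Δ_k(1)(x⊗1) = (x⊗1)Δ_k(1) } = A_t and { x ∈ A : Δ_k(x) = Δ_k(1)(1⊗x) = (1⊗x)Δ_k(1) } = A_s; moreover the canonical element associated to the deformed coproduct is k⁻¹q, i.e., k⁻¹q is an invertible element of A_t and Δ_k(1) = Σ_γ Σ_{i,j} (1/n_γ) κ_k⁻¹(e^γ_{i,j} (k⁻¹q)) ⊗ e^γ_{j,i}, where κ_k⁻¹ is the inverse of the bijection κ_k. -/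
/- Context: a finite-dimensional C*-quantum groupoid (weak Hopf C*-algebra)
`(A, Δ, κ, ε)`, together with a fixed system of matrix units `e γ i j`
(`γ ∈ Γ` finite, `1 ≤ i,j ≤ n γ`) spanning the target Cartan subalgebra `A_t`.
The componentwise involution of `A ⊗[ℂ] A` is encoded by the field `starT`
(uniquely determined by `starT_add` and `starT_tmul`). -/

open scoped TensorProduct ComplexOrder

/-- A finite-dimensional C*-quantum groupoid (weak Hopf C*-algebra) with a chosen
system of matrix units for its target Cartan subalgebra. -/
structure WeakHopfCStar (A : Type*) (Γ : Type*) [Fintype Γ] [DecidableEq Γ]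
    [NormedRing A] [StarRing A] [CStarRing A] [NormedAlgebra ℂ A] [StarModule ℂ A]
    [FiniteDimensional ℂ A] (n : Γ → ℕ) where
  /-- the coproduct -/
  Δ : A →ₗ[ℂ] A ⊗[ℂ] A
  /-- the antipode -/
  κ : A →ₗ[ℂ] A
  /-- the counit -/
  ε : A →ₗ[ℂ] ℂ
  /-- the componentwise involution of `A ⊗ A` -/
  starT : A ⊗[ℂ] A → A ⊗[ℂ] A
  starT_add : ∀ x y : A ⊗[ℂ] A, starT (x + y) = starT x + starT y
  starT_tmul : ∀ a b : A, starT (a ⊗ₜ[ℂ] b) = star a ⊗ₜ[ℂ] star b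
  Δ_mul : ∀ a b : A, Δ (a * b) = Δ a * Δ b
  Δ_star : ∀ a : A, Δ (star a) = starT (Δ a)
  coassoc : ∀ a : A,
    (TensorProduct.assoc ℂ A A A) ((TensorProduct.map Δ LinearMap.id) (Δ a)) =
      (TensorProduct.map LinearMap.id Δ) (Δ a)
  κ_antimul : ∀ x y : A, κ (x * y) = κ y * κ x
  κ_star_sq : ∀ a : A, κ (star (κ (star a))) = a
  κ_flip : ∀ a : A,
    (TensorProduct.map κ κ) (Δ a) = (TensorProduct.comm ℂ A A) (Δ (κ a))
  antipode : ∀ x : A,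
    (TensorProduct.map ((LinearMap.mul' ℂ A).comp (TensorProduct.map κ LinearMap.id))
        LinearMap.id) ((TensorProduct.map Δ LinearMap.id) (Δ x)) =
      ((1 : A) ⊗ₜ[ℂ] x) * Δ 1
  ε_pos : ∀ a : A, 0 ≤ ε (star a * a)
  ε_counit_l : ∀ a : A,
    (TensorProduct.lid ℂ A) ((TensorProduct.map ε LinearMap.id) (Δ a)) = a
  ε_counit_r : ∀ a : A,
    (TensorProduct.rid ℂ A) ((TensorProduct.map LinearMap.id ε) (Δ a)) = a
  ε_weak : ∀ x y : A,
    (LinearMap.mul' ℂ ℂ)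
        ((TensorProduct.map ε ε) ((x ⊗ₜ[ℂ] (1 : A)) * Δ 1 * ((1 : A) ⊗ₜ[ℂ] y))) =
      ε (x * y)
  n_pos : ∀ γ : Γ, 1 ≤ n γ
  /-- the matrix units of the target Cartan subalgebra `A_t` -/
  e : (γ : Γ) → Fin (n γ) → Fin (n γ) → A
  e_target : ∀ (γ : Γ) (i j : Fin (n γ)),
    Δ (e γ i j) = Δ 1 * (e γ i j ⊗ₜ[ℂ] (1 : A)) ∧
      Δ (e γ i j) = (e γ i j ⊗ₜ[ℂ] (1 : A)) * Δ 1
  e_mul_same : ∀ (γ : Γ) (i j k l : Fin (n γ)),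
    e γ i j * e γ k l = if j = k then e γ i l else 0
  e_mul_ne : ∀ (γ δ : Γ), γ ≠ δ → ∀ (i j : Fin (n γ)) (k l : Fin (n δ)),
    e γ i j * e δ k l = 0
  e_star : ∀ (γ : Γ) (i j : Fin (n γ)), star (e γ i j) = e γ j i
  e_sum : ∑ γ : Γ, ∑ i : Fin (n γ), e γ i i = 1
  e_span : ∀ x : A,
    (Δ x = Δ 1 * (x ⊗ₜ[ℂ] (1 : A)) ∧ Δ x = (x ⊗ₜ[ℂ] (1 : A)) * Δ 1) →
      x ∈ Submodule.span ℂ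
        (Set.range fun p : Σ γ : Γ, Fin (n γ) × Fin (n γ) => e p.1 p.2.1 p.2.2)

namespace WeakHopfCStar

variable {A Γ : Type*} [Fintype Γ] [DecidableEq Γ]
  [NormedRing A] [StarRing A] [CStarRing A] [NormedAlgebra ℂ A] [StarModule ℂ A]
  [FiniteDimensional ℂ A] {n : Γ → ℕ}

/-- The target Cartan subalgebra `A_t`. -/
def tgt (W : WeakHopfCStar A Γ n) : Set A :=
  {x | W.Δ x = W.Δ 1 * (x ⊗ₜ[ℂ] (1 : A)) ∧ W.Δ x = (x ⊗ₜ[ℂ] (1 : A)) * W.Δ 1}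

/-- The source Cartan subalgebra `A_s`. -/
def src (W : WeakHopfCStar A Γ n) : Set A :=
  {x | W.Δ x = W.Δ 1 * ((1 : A) ⊗ₜ[ℂ] x) ∧ W.Δ x = ((1 : A) ⊗ₜ[ℂ] x) * W.Δ 1}

/-- The inverse of the antipode, `κ⁻¹ = * ∘ κ ∘ *`. -/
noncomputable def κinv (W : WeakHopfCStar A Γ n) (a : A) : A := star (W.κ (star a))

/-- The canonical conditional expectation `E_{Z(A_t)}` of `A_t` onto its center. -/
noncomputable def EZt (W : WeakHopfCStar A Γ n) (x : A) : A :=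
  ∑ γ : Γ, ∑ i : Fin (n γ), ∑ j : Fin (n γ),
    (n γ : ℂ)⁻¹ • (W.e γ i j * x * W.e γ j i)

/-- The defining property of the canonical element `q ∈ A_t`:
`Δ(1) = Σ_γ Σ_{i,j} (1/n_γ) κ⁻¹(e^γ_{i,j} q) ⊗ e^γ_{j,i}`. -/
noncomputable def qFormula (W : WeakHopfCStar A Γ n) (q : A) : Prop :=
  W.Δ 1 = ∑ γ : Γ, ∑ i : Fin (n γ), ∑ j : Fin (n γ),
    (n γ : ℂ)⁻¹ • (W.κinv (W.e γ i j * q) ⊗ₜ[ℂ] W.e γ j i)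

end WeakHopfCStar

namespace WeakHopfCStar

variable {A Γ : Type*} [Fintype Γ] [DecidableEq Γ]
  [NormedRing A] [StarRing A] [CStarRing A] [NormedAlgebra ℂ A] [StarModule ℂ A]
  [FiniteDimensional ℂ A] {n : Γ → ℕ}

/-- The deformed coproduct `Δ_k(a) = Δ(a)(1 ⊗ k⁻¹)`. -/
noncomputable def Δk (W : WeakHopfCStar A Γ n) (k : A) : A →ₗ[ℂ] A ⊗[ℂ] A :=
  (LinearMap.mulRight ℂ ((1 : A) ⊗ₜ[ℂ] Ring.inverse k)).comp W.Δ

/-- The deformed antipode `κ_k(a) = k κ(a) k⁻¹`. -/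
noncomputable def κk (W : WeakHopfCStar A Γ n) (k : A) : A →ₗ[ℂ] A :=
  (LinearMap.mulLeft ℂ k).comp ((LinearMap.mulRight ℂ (Ring.inverse k)).comp W.κ)

/-- The deformed counit `ε_k(a) = ε(a k)`. -/
noncomputable def εk (W : WeakHopfCStar A Γ n) (k : A) : A →ₗ[ℂ] ℂ :=
  W.ε.comp (LinearMap.mulRight ℂ k)

end WeakHopfCStar

/-!
Right multiplication by the invertible element `1 ⊗ k⁻¹` commutes with `x ⊗ 1`, and also with
`1 ⊗ x` once `Δ(x) = (1 ⊗ x)Δ(1)`, because such an `x` commutes with `A_t ∋ k`; so it cancels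
from the defining equations of both Cartan subalgebras.

For the canonical element write `Δ(1) = (κ⁻¹(· q) ⊗ id)(E)`, where
`E = Σ (1/n_γ) e_{ij} ⊗ e_{ji}` satisfies `(t ⊗ 1)E = E(1 ⊗ t)` for `t ∈ A_t` and the `e_{ji}`
can be sliced off its second leg. Comparing `ς Δ(1)` with `(κ⁻¹ ⊗ κ⁻¹)Δ(1)` then gives
`κ⁻²(tq) = qt` on `A_t`, so `κ²(k) = k` forces `kq = qk`, and moving `k⁻¹` across `E` turns
`Δ(1)(1 ⊗ k⁻¹)` into the claimed sum for `k⁻¹q`.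
-/

theorem TensorProduct.eq_zero_of_tmul_eq_zero {K V U : Type*} [Field K] [AddCommGroup V]
    [Module K V] [AddCommGroup U] [Module K U] {v : V} {u : U} (h : v ⊗ₜ[K] u = 0)
    (hu : u ≠ 0) : v = 0 := by
  obtain ⟨f, hf⟩ := Module.Projective.exists_dual_eq_one K hu
  simpa [hf] using
    congrArg ((TensorProduct.rid K V).toLinearMap ∘ₗ TensorProduct.map LinearMap.id f) h

theorem IsUnit.mul_right_eq_and_iff {M : Type*} [Monoid M] {x d y u : M} (hu : IsUnit u)
    (hc : x = y * d → Commute u y) :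
    (x * u = d * u * y ∧ x * u = y * (d * u)) ↔ (x = d * y ∧ x = y * d) := by
  rw [← mul_assoc y, hu.mul_left_inj]
  refine and_congr_left fun h => ?_
  rw [mul_assoc, hc h, ← mul_assoc, hu.mul_left_inj]

theorem Commute.ringInverse_right {M₀ : Type*} [MonoidWithZero M₀] {a b : M₀}
    (h : Commute a b) : Commute a (Ring.inverse b) := by
  by_cases hb : IsUnit b
  · obtain ⟨u, rfl⟩ := hb
    rw [Ring.inverse_unit]
    exact h.units_inv_right
  · rw [Ring.inverse_non_unit _ hb]
    exact Commute.zero_right a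

theorem Algebra.TensorProduct.tmul_one_mul_eq_rTensor {R A B : Type*} [CommSemiring R]
    [Semiring A] [Algebra R A] [Semiring B] [Algebra R B] (a : A) (x : A ⊗[R] B) :
    (a ⊗ₜ[R] (1 : B)) * x = (LinearMap.mulLeft R a).rTensor B x := by
  rw [← LinearMap.mulLeft_apply (R := R), LinearMap.mulLeft_tmul, LinearMap.mulLeft_one]
  rfl

theorem Algebra.TensorProduct.mul_one_tmul_eq_lTensor {R A B : Type*} [CommSemiring R]
    [Semiring A] [Algebra R A] [Semiring B] [Algebra R B] (b : B) (x : A ⊗[R] B) :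
    x * ((1 : A) ⊗ₜ[R] b) = (LinearMap.mulRight R b).lTensor A x := by
  rw [← LinearMap.mulRight_apply (R := R), LinearMap.mulRight_tmul, LinearMap.mulRight_one]
  rfl

theorem Algebra.TensorProduct.isUnit_one_tmul {R A B : Type*} [CommSemiring R]
    [Semiring A] [Algebra R A] [Semiring B] [Algebra R B] {b : B} (hb : IsUnit b) :
    IsUnit ((1 : A) ⊗ₜ[R] b) :=
  hb.map Algebra.TensorProduct.includeRight

namespace WeakHopfCStar

variable {A Γ : Type*} [Fintype Γ] [DecidableEq Γ]
  [NormedRing A] [StarRing A] [CStarRing A] [NormedAlgebra ℂ A] [StarModule ℂ A]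
  [FiniteDimensional ℂ A] {n : Γ → ℕ} (W : WeakHopfCStar A Γ n)

section Antipode

@[simp]
lemma κ_κinv (a : A) : W.κ (W.κinv a) = a := W.κ_star_sq a

@[simp]
lemma κinv_κ (a : A) : W.κinv (W.κ a) = a := by
  simpa [κinv] using congrArg star (W.κ_star_sq (star a))

lemma κ_one : W.κ 1 = 1 := by
  simpa using (W.κ_antimul (W.κinv 1) 1).symm

lemma κinv_mul (x y : A) : W.κinv (x * y) = W.κinv y * W.κinv x := by
  simp only [κinv, star_mul, W.κ_antimul]

noncomputable def κEquiv : A ≃ₗ[ℂ] A :=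
  { W.κ with
    invFun := W.κinv
    left_inv := W.κinv_κ
    right_inv := W.κ_κinv }

@[simp]
lemma κEquiv_symm_apply (a : A) : W.κEquiv.symm a = W.κinv a := rfl

end Antipode

section Coproduct

lemma Δ_one_mul (x : A) : W.Δ 1 * W.Δ x = W.Δ x := by rw [← W.Δ_mul, one_mul]

lemma Δ_mul_one (x : A) : W.Δ x * W.Δ 1 = W.Δ x := by rw [← W.Δ_mul, mul_one]

lemma Δ_injective : Function.Injective W.Δ := fun a b h => by
  rw [← W.ε_counit_r a, h, W.ε_counit_r]

lemma one_mem_tgt : (1 : A) ∈ W.tgt := by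
  simp [tgt, ← Algebra.TensorProduct.one_def]

lemma mul_mem_tgt {a b : A} (ha : a ∈ W.tgt) (hb : b ∈ W.tgt) : a * b ∈ W.tgt := by
  have hab : (a * b) ⊗ₜ[ℂ] (1 : A) = (a ⊗ₜ[ℂ] 1) * (b ⊗ₜ[ℂ] 1) := by
    rw [Algebra.TensorProduct.tmul_mul_tmul, mul_one]
  constructor
  · rw [W.Δ_mul, hab, ← mul_assoc, ← ha.1, hb.1, ← mul_assoc, W.Δ_mul_one]
  · rw [W.Δ_mul, hab, mul_assoc, ← hb.2, ha.2, mul_assoc, W.Δ_one_mul]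

lemma inverse_mem_tgt {k : A} (hk : k ∈ W.tgt) (hku : IsUnit k) :
    Ring.inverse k ∈ W.tgt := by
  set K := Ring.inverse k
  have hkK : (k ⊗ₜ[ℂ] (1 : A)) * (K ⊗ₜ[ℂ] 1) = 1 := by
    rw [Algebra.TensorProduct.tmul_mul_tmul, mul_one, Ring.mul_inverse_cancel k hku,
      Algebra.TensorProduct.one_def]
  have hKk : (K ⊗ₜ[ℂ] (1 : A)) * (k ⊗ₜ[ℂ] 1) = 1 := by
    rw [Algebra.TensorProduct.tmul_mul_tmul, mul_one, Ring.inverse_mul_cancel k hku,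
      Algebra.TensorProduct.one_def]
  have hcomm : W.Δ 1 * (K ⊗ₜ[ℂ] 1) = (K ⊗ₜ[ℂ] 1) * W.Δ 1 :=
    Commute.units_inv_right (u := ⟨_, _, hkK, hKk⟩) (hk.1.symm.trans hk.2)
  have hΔK : W.Δ K = W.Δ 1 * (K ⊗ₜ[ℂ] 1) :=
    calc W.Δ K = W.Δ K * (W.Δ k * (K ⊗ₜ[ℂ] 1)) := by
          rw [hk.1, mul_assoc, hkK, mul_one, W.Δ_mul_one]
      _ = W.Δ 1 * (K ⊗ₜ[ℂ] 1) := by rw [← mul_assoc, ← W.Δ_mul, Ring.inverse_mul_cancel k hku]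
  exact ⟨hΔK, hΔK.trans hcomm⟩

lemma commute_of_mem_tgt {x y : A} (hx : W.Δ x = ((1 : A) ⊗ₜ[ℂ] x) * W.Δ 1)
    (hy : y ∈ W.tgt) : Commute x y := by
  refine W.Δ_injective ?_
  calc W.Δ (x * y) = ((1 : A) ⊗ₜ[ℂ] x) * (y ⊗ₜ[ℂ] 1) * W.Δ 1 := by
        rw [W.Δ_mul, hx, hy.1, mul_assoc, ← mul_assoc (W.Δ 1), W.Δ_one_mul, ← hy.1, hy.2,
          ← mul_assoc]
    _ = (y ⊗ₜ[ℂ] 1) * ((1 : A) ⊗ₜ[ℂ] x) * W.Δ 1 := by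
        simp only [Algebra.TensorProduct.tmul_mul_tmul, one_mul, mul_one]
    _ = W.Δ (y * x) := by
        rw [W.Δ_mul, hy.2, mul_assoc _ (W.Δ 1), W.Δ_one_mul, hx, mul_assoc]

end Coproduct

section SepIdem

/-- The symmetric separability idempotent of `A_t`. -/
noncomputable def sepIdem : A ⊗[ℂ] A :=
  ∑ γ : Γ, ∑ i : Fin (n γ), ∑ j : Fin (n γ), (n γ : ℂ)⁻¹ • (W.e γ i j ⊗ₜ[ℂ] W.e γ j i)

lemma map_sepIdem (F G : A →ₗ[ℂ] A) :
    TensorProduct.map F G W.sepIdem = ∑ γ : Γ, ∑ i : Fin (n γ), ∑ j : Fin (n γ),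
      (n γ : ℂ)⁻¹ • (F (W.e γ i j) ⊗ₜ[ℂ] G (W.e γ j i)) := by
  simp [sepIdem, map_sum]

lemma comm_sepIdem : TensorProduct.comm ℂ A A W.sepIdem = W.sepIdem := by
  simp only [sepIdem, map_sum, map_smul, TensorProduct.comm_tmul]
  exact Fintype.sum_congr _ _ fun γ => Finset.sum_comm

lemma tmul_one_mul_sepIdem {t : A} (ht : t ∈ W.tgt) :
    (t ⊗ₜ[ℂ] (1 : A)) * W.sepIdem = W.sepIdem * ((1 : A) ⊗ₜ[ℂ] t) := by
  suffices Set.EqOn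
      (LinearMap.mulRight ℂ W.sepIdem ∘ₗ Algebra.TensorProduct.includeLeft.toLinearMap)
      (LinearMap.mulLeft ℂ W.sepIdem ∘ₗ Algebra.TensorProduct.includeRight.toLinearMap)
      (Set.range fun p : Σ γ : Γ, Fin (n γ) × Fin (n γ) => W.e p.1 p.2.1 p.2.2) from
    LinearMap.eqOn_span' this (W.e_span t ht)
  rintro _ ⟨⟨δ, c, d⟩, rfl⟩
  simp only [sepIdem, LinearMap.comp_apply, AlgHom.toLinearMap_apply,
    Algebra.TensorProduct.includeLeft_apply, Algebra.TensorProduct.includeRight_apply,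
    LinearMap.mulRight_apply, LinearMap.mulLeft_apply, Finset.mul_sum, Finset.sum_mul,
    mul_smul_comm, smul_mul_assoc, Algebra.TensorProduct.tmul_mul_tmul, one_mul, mul_one]
  rw [Fintype.sum_eq_single δ fun γ hγ => by simp [W.e_mul_ne δ γ (Ne.symm hγ)],
    Fintype.sum_eq_single δ fun γ hγ => by simp [W.e_mul_ne γ δ hγ]]
  simp [W.e_mul_same, TensorProduct.ite_tmul, TensorProduct.tmul_ite, smul_ite]

lemma eq_zero_of_map_sepIdem_eq_zero {F : A →ₗ[ℂ] A}
    (hF : TensorProduct.map F LinearMap.id W.sepIdem = 0) {t : A} (ht : t ∈ W.tgt) :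
    F t = 0 := by
  refine LinearMap.mem_ker.mp (Submodule.span_le.mpr ?_ (W.e_span t ht))
  rintro _ ⟨⟨δ, a, b⟩, rfl⟩
  have hslice : ((1 : A) ⊗ₜ[ℂ] W.e δ b b) * TensorProduct.map F LinearMap.id W.sepIdem *
      ((1 : A) ⊗ₜ[ℂ] W.e δ a a) = (n δ : ℂ)⁻¹ • (F (W.e δ a b) ⊗ₜ[ℂ] W.e δ b a) := by
    simp only [map_sepIdem, LinearMap.id_apply, Finset.mul_sum, Finset.sum_mul,
      mul_smul_comm, smul_mul_assoc, Algebra.TensorProduct.tmul_mul_tmul, one_mul, mul_one]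
    rw [Fintype.sum_eq_single δ fun γ hγ => by simp [W.e_mul_ne δ γ (Ne.symm hγ)]]
    simp [W.e_mul_same, TensorProduct.tmul_ite, smul_ite]
  rw [hF, mul_zero, zero_mul, eq_comm, smul_eq_zero] at hslice
  have hn : (n δ : ℂ)⁻¹ ≠ 0 :=
    inv_ne_zero (Nat.cast_ne_zero.mpr (Nat.one_le_iff_ne_zero.mp (W.n_pos δ)))
  by_cases hba : W.e δ b a = 0
  · simp [← W.e_star δ b a, hba]
  · exact TensorProduct.eq_zero_of_tmul_eq_zero (hslice.resolve_left hn) hba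

end SepIdem

section CanonicalElement

variable {q : A}

lemma Δ_one_eq_rTensor_sepIdem (hqf : W.qFormula q) :
    W.Δ 1 = (W.κEquiv.symm.toLinearMap ∘ₗ LinearMap.mulRight ℂ q).rTensor A W.sepIdem := by
  rw [LinearMap.rTensor_def, map_sepIdem]
  exact hqf

lemma comm_Δ_one : TensorProduct.comm ℂ A A (W.Δ 1) =
    TensorProduct.map W.κEquiv.symm.toLinearMap W.κEquiv.symm.toLinearMap (W.Δ 1) := by
  have hflip : TensorProduct.map W.κEquiv.toLinearMap W.κEquiv.toLinearMap (W.Δ 1) =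
      TensorProduct.comm ℂ A A (W.Δ 1) := by
    have h := W.κ_flip 1
    rw [W.κ_one] at h
    exact h
  calc TensorProduct.comm ℂ A A (W.Δ 1)
      = TensorProduct.comm ℂ A A (TensorProduct.map W.κEquiv.symm.toLinearMap
          W.κEquiv.symm.toLinearMap
            (TensorProduct.map W.κEquiv.toLinearMap W.κEquiv.toLinearMap (W.Δ 1))) := by
        rw [← LinearMap.comp_apply (TensorProduct.map _ _), ← TensorProduct.map_comp,
          LinearEquiv.symm_comp, TensorProduct.map_id, LinearMap.id_apply]
    _ = _ := by rw [hflip, ← TensorProduct.map_comm, TensorProduct.comm_comm]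

lemma κinv_κinv_mul (hqt : q ∈ W.tgt) (hqf : W.qFormula q) {t : A} (ht : t ∈ W.tgt) :
    W.κinv (W.κinv (t * q)) = q * t := by
  set κinvL := W.κEquiv.symm.toLinearMap
  set Φ := κinvL ∘ₗ LinearMap.mulRight ℂ q
  have key :
      (LinearMap.mulLeft ℂ q).rTensor A W.sepIdem = (κinvL ∘ₗ Φ).rTensor A W.sepIdem := by
    have h := congrArg (TensorProduct.map LinearMap.id W.κEquiv.toLinearMap) W.comm_Δ_one
    rw [W.Δ_one_eq_rTensor_sepIdem hqf, LinearMap.rTensor_def, ← TensorProduct.map_comm,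
      W.comm_sepIdem] at h
    simp only [← LinearMap.comp_apply (TensorProduct.map _ _), ← TensorProduct.map_comp,
      LinearMap.id_comp, LinearMap.comp_id, ← LinearMap.comp_assoc, LinearEquiv.comp_symm] at h
    rw [← Algebra.TensorProduct.tmul_one_mul_eq_rTensor, W.tmul_one_mul_sepIdem hqt,
      Algebra.TensorProduct.mul_one_tmul_eq_lTensor, LinearMap.lTensor, h]
    rfl
  have := W.eq_zero_of_map_sepIdem_eq_zero (F := LinearMap.mulLeft ℂ q - κinvL ∘ₗ Φ)
    (by rw [← LinearMap.rTensor_def, LinearMap.rTensor_sub, LinearMap.sub_apply, key,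
      sub_self]) ht
  simp only [LinearMap.sub_apply, LinearMap.comp_apply, LinearMap.mulLeft_apply,
    LinearMap.mulRight_apply, Φ, κinvL, LinearEquiv.coe_coe, κEquiv_symm_apply] at this
  exact (sub_eq_zero.mp this).symm

lemma commute_of_κ_κ_eq (hqt : q ∈ W.tgt) (hqf : W.qFormula q) {k : A} (hkt : k ∈ W.tgt)
    (hk2 : W.κ (W.κ k) = k) : Commute k q := by
  have hq : W.κinv (W.κinv q) = q := by
    simpa using W.κinv_κinv_mul hqt hqf W.one_mem_tgt
  have hk : W.κinv (W.κinv k) = k := by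
    conv_lhs => rw [← hk2]
    simp
  calc k * q = W.κinv (W.κinv (k * q)) := by rw [W.κinv_mul, W.κinv_mul, hq, hk]
    _ = q * k := W.κinv_κinv_mul hqt hqf hkt

end CanonicalElement

section Deformation

variable {k : A}

lemma Δk_apply (x : A) : W.Δk k x = W.Δ x * ((1 : A) ⊗ₜ[ℂ] Ring.inverse k) := rfl

lemma κk_apply (a : A) : W.κk k a = k * (W.κ a * Ring.inverse k) := rfl

lemma setOf_Δk_tgt_eq (hku : IsUnit k) :
    {x : A | W.Δk k x = W.Δk k 1 * (x ⊗ₜ[ℂ] (1 : A)) ∧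
      W.Δk k x = (x ⊗ₜ[ℂ] (1 : A)) * W.Δk k 1} = W.tgt := by
  ext x
  refine (Algebra.TensorProduct.isUnit_one_tmul (isUnit_ringInverse.mpr hku)).mul_right_eq_and_iff
    fun _ => ?_
  simp [Commute, SemiconjBy, Algebra.TensorProduct.tmul_mul_tmul]

lemma setOf_Δk_src_eq (hkt : k ∈ W.tgt) (hku : IsUnit k) :
    {x : A | W.Δk k x = W.Δk k 1 * ((1 : A) ⊗ₜ[ℂ] x) ∧
      W.Δk k x = ((1 : A) ⊗ₜ[ℂ] x) * W.Δk k 1} = W.src := by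
  ext x
  refine (Algebra.TensorProduct.isUnit_one_tmul (isUnit_ringInverse.mpr hku)).mul_right_eq_and_iff
    fun hx => ?_
  have hxK : Commute x (Ring.inverse k) := (W.commute_of_mem_tgt hx hkt).ringInverse_right
  simp [Commute, SemiconjBy, Algebra.TensorProduct.tmul_mul_tmul, hxK.eq]

lemma κinv_conj_κk (hku : IsUnit k) (a : A) :
    W.κinv (Ring.inverse k * W.κk k a * k) = a := by
  rw [κk_apply, ← mul_assoc, ← mul_assoc, Ring.inverse_mul_cancel k hku, one_mul, mul_assoc,
    Ring.inverse_mul_cancel k hku, mul_one, κinv_κ]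

lemma κk_κinv_conj (hku : IsUnit k) (a : A) :
    W.κk k (W.κinv (Ring.inverse k * a * k)) = a := by
  rw [κk_apply, κ_κinv, mul_assoc _ k, Ring.mul_inverse_cancel k hku, mul_one, ← mul_assoc,
    Ring.mul_inverse_cancel k hku, one_mul]

lemma Δk_one_eq {q : A} (hqt : q ∈ W.tgt) (hqf : W.qFormula q) (hkt : k ∈ W.tgt)
    (hku : IsUnit k) (hk2 : W.κ (W.κ k) = k) :
    W.Δk k 1 = ∑ γ : Γ, ∑ i : Fin (n γ), ∑ j : Fin (n γ), (n γ : ℂ)⁻¹ •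
      (W.κinv (Ring.inverse k * (W.e γ i j * (Ring.inverse k * q)) * k) ⊗ₜ[ℂ] W.e γ j i) := by
  have hconj (t : A) :
      Ring.inverse k * (t * (Ring.inverse k * q)) * k = Ring.inverse k * t * q := by
    rw [mul_assoc, mul_assoc, mul_assoc, ← (W.commute_of_κ_κ_eq hqt hqf hkt hk2).eq,
      ← mul_assoc (Ring.inverse k) k, Ring.inverse_mul_cancel k hku, one_mul, ← mul_assoc]
  calc W.Δk k 1
      = (W.κEquiv.symm.toLinearMap ∘ₗ LinearMap.mulRight ℂ q).rTensor A
          (W.sepIdem * ((1 : A) ⊗ₜ[ℂ] Ring.inverse k)) := by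
        rw [Δk_apply, W.Δ_one_eq_rTensor_sepIdem hqf,
          Algebra.TensorProduct.mul_one_tmul_eq_lTensor,
          Algebra.TensorProduct.mul_one_tmul_eq_lTensor, ← LinearMap.comp_apply,
          ← LinearMap.comp_apply, LinearMap.lTensor_comp_rTensor, LinearMap.rTensor_comp_lTensor]
    _ = _ := by
        rw [← W.tmul_one_mul_sepIdem (W.inverse_mem_tgt hkt hku),
          Algebra.TensorProduct.tmul_one_mul_eq_rTensor, ← LinearMap.comp_apply,
          ← LinearMap.rTensor_comp, LinearMap.rTensor_def, map_sepIdem]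
        simp [hconj]

end Deformation

end WeakHopfCStar

theorem WeakHopfCStar.deformed_Cartan_and_q_general {A Γ : Type*} [Fintype Γ] [DecidableEq Γ]
    [NormedRing A] [StarRing A] [CStarRing A] [NormedAlgebra ℂ A] [StarModule ℂ A]
    [FiniteDimensional ℂ A] {n : Γ → ℕ} (W : WeakHopfCStar A Γ n)
    (q : A) (hqt : q ∈ W.tgt) (hqu : IsUnit q) (hqf : W.qFormula q)
    (k : A) (hkt : k ∈ W.tgt) (hku : IsUnit k)
    (hk2 : W.κ (W.κ k) = k) :
    {x : A | W.Δk k x = W.Δk k 1 * (x ⊗ₜ[ℂ] (1 : A)) ∧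
        W.Δk k x = (x ⊗ₜ[ℂ] (1 : A)) * W.Δk k 1} = W.tgt ∧
    {x : A | W.Δk k x = W.Δk k 1 * ((1 : A) ⊗ₜ[ℂ] x) ∧
        W.Δk k x = ((1 : A) ⊗ₜ[ℂ] x) * W.Δk k 1} = W.src ∧
    IsUnit (Ring.inverse k * q) ∧ Ring.inverse k * q ∈ W.tgt ∧
    (∀ a : A, W.κinv (Ring.inverse k * W.κk k a * k) = a) ∧
    (∀ a : A, W.κk k (W.κinv (Ring.inverse k * a * k)) = a) ∧
    W.Δk k 1 = ∑ γ : Γ, ∑ i : Fin (n γ), ∑ j : Fin (n γ),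
      (n γ : ℂ)⁻¹ •
        (W.κinv (Ring.inverse k * (W.e γ i j * (Ring.inverse k * q)) * k)
          ⊗ₜ[ℂ] W.e γ j i) :=
  ⟨W.setOf_Δk_tgt_eq hku, W.setOf_Δk_src_eq hkt hku, (isUnit_ringInverse.mpr hku).mul hqu,
    W.mul_mem_tgt (W.inverse_mem_tgt hkt hku) hqt, W.κinv_conj_κk hku, W.κk_κinv_conj hku,
    W.Δk_one_eq hqt hqf hkt hku hk2⟩

/-- The Cartan subalgebras of the deformed structure coincide with the original ones,
and `k⁻¹q` is an invertible element of `A_t` which is the canonical element of the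
deformed structure: `Δ_k(1) = Σ (1/n_γ) κ_k⁻¹(e^γ_{i,j} (k⁻¹q)) ⊗ e^γ_{j,i}`, where
`κ_k⁻¹ : a ↦ κ⁻¹(k⁻¹ a k)` is the inverse of the bijection `κ_k`. -/
theorem WeakHopfCStar.deformed_Cartan_and_q {A Γ : Type*} [Fintype Γ] [DecidableEq Γ]
    [NormedRing A] [StarRing A] [CStarRing A] [NormedAlgebra ℂ A] [StarModule ℂ A]
    [FiniteDimensional ℂ A] {n : Γ → ℕ} (W : WeakHopfCStar A Γ n)
    (q : A) (hqt : q ∈ W.tgt) (hqu : IsUnit q) (hqf : W.qFormula q)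
    (k : A) (hkt : k ∈ W.tgt) (hku : IsUnit k) (hkpos : ∃ b : A, k = star b * b)
    (hk2 : W.κ (W.κ k) = k) (hkE : W.EZt (Ring.inverse k * q) = 1) :
    {x : A | W.Δk k x = W.Δk k 1 * (x ⊗ₜ[ℂ] (1 : A)) ∧
        W.Δk k x = (x ⊗ₜ[ℂ] (1 : A)) * W.Δk k 1} = W.tgt ∧
    {x : A | W.Δk k x = W.Δk k 1 * ((1 : A) ⊗ₜ[ℂ] x) ∧
        W.Δk k x = ((1 : A) ⊗ₜ[ℂ] x) * W.Δk k 1} = W.src ∧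
    IsUnit (Ring.inverse k * q) ∧ Ring.inverse k * q ∈ W.tgt ∧
    (∀ a : A, W.κinv (Ring.inverse k * W.κk k a * k) = a) ∧
    (∀ a : A, W.κk k (W.κinv (Ring.inverse k * a * k)) = a) ∧
    W.Δk k 1 = ∑ γ : Γ, ∑ i : Fin (n γ), ∑ j : Fin (n γ),
      (n γ : ℂ)⁻¹ •
        (W.κinv (Ring.inverse k * (W.e γ i j * (Ring.inverse k * q)) * k)
          ⊗ₜ[ℂ] W.e γ j i) :=
  WeakHopfCStar.deformed_Cartan_and_q_general W q hqt hqu hqf k hkt hku hk2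
end
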